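/- arXiv:2107.07403 — 3 statements merged into one kernel-verified Lean document; each statement's English description precedes it below -/
import Mathlib

section
/- Let F be a finite set with weights w: F → ℝ_{>0}, and for each ℓ∈F a witness set W_ℓ with |W_ℓ| ∈ {1,2}, the W_ℓ pairwise disjoint, U = ⋃_ℓ W_ℓ, and w̄(u) = w(ℓ)/|W_ℓ| for u ∈ W_ℓ. Define Φ(F) = ∑_{ℓ∈F} H_{|W_ℓ|}·w(ℓ) where H_1=1, H_2=3/2. For any subset D ⊆ U, let F' = {ℓ ∈ F : W_ℓ \ D ≠ ∅} with witness sets W_ℓ \ D. Then Φ(F) − Φ(F') ≥ ∑_{u∈D} w̄(u). -/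
/-!
Split `D` along the disjoint witness sets. A link `ℓ` losing `k` of its `q` witnesses accounts for
`k * (w ℓ / q)` on the left, while its term of `Φ` drops by `(H q - H (q - k)) * w ℓ`, and
`H q - H (q - k)` is a sum of `k` terms `1 / (i + 1)` with `i < q`, each at least `1 / q`.
-/

open Finset

noncomputable def H (q : ℕ) : ℝ := ∑ i ∈ Finset.range q, 1 / (i + 1 : ℝ)

@[simp]
lemma H_zero : H 0 = 0 := by
  simp [H]

lemma H_sub_H_eq_sum_Ico {m n : ℕ} (hmn : m ≤ n) :
    H n - H m = ∑ i ∈ Ico m n, 1 / (i + 1 : ℝ) :=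
  (sum_Ico_eq_sub _ hmn).symm

lemma div_le_H_sub_H {q k : ℕ} (hk : k ≤ q) : (k : ℝ) / q ≤ H q - H (q - k) := by
  rw [H_sub_H_eq_sum_Ico (Nat.sub_le q k)]
  have hterm : ∀ i ∈ Ico (q - k) q, 1 / (q : ℝ) ≤ 1 / (i + 1 : ℝ) := fun i hi => by
    have hi : i + 1 ≤ q := (mem_Ico.mp hi).2
    exact one_div_le_one_div_of_le (by positivity) (by exact_mod_cast hi)
  calc (k : ℝ) / q = (Ico (q - k) q).card • (1 / (q : ℝ)) := by
        rw [Nat.card_Ico, Nat.sub_sub_self hk, nsmul_eq_mul, mul_one_div]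
    _ ≤ ∑ i ∈ Ico (q - k) q, 1 / (i + 1 : ℝ) := card_nsmul_le_sum _ _ _ hterm

lemma card_inter_mul_div_card_le {β : Type*} [DecidableEq β] (W D : Finset β) {w : ℝ}
    (hw : 0 ≤ w) :
    ((W ∩ D).card : ℝ) * (w / W.card) ≤ (H W.card - H (W \ D).card) * w := by
  have hcard : (W \ D).card = W.card - (W ∩ D).card := by
    have := card_sdiff_add_card_inter W D
    omega
  rw [hcard]
  calc ((W ∩ D).card : ℝ) * (w / W.card) = (W ∩ D).card / W.card * w := by ring
    _ ≤ _ := mul_le_mul_of_nonneg_right (div_le_H_sub_H (card_le_card inter_subset_left)) hw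

lemma sum_eq_sum_sum_inter_of_subset_biUnion {α β M : Type*} [DecidableEq β] [AddCommMonoid M]
    {F : Finset α} {W : α → Finset β} (hdisj : (F : Set α).PairwiseDisjoint W) {D : Finset β}
    (hD : D ⊆ F.biUnion W) (f : β → M) :
    ∑ u ∈ D, f u = ∑ ℓ ∈ F, ∑ u ∈ W ℓ ∩ D, f u := by
  calc ∑ u ∈ D, f u = ∑ u ∈ F.biUnion fun ℓ => W ℓ ∩ D, f u := by
        rw [← biUnion_inter, inter_eq_right.mpr hD]
    _ = ∑ ℓ ∈ F, ∑ u ∈ W ℓ ∩ D, f u := sum_biUnion (hdisj.mono fun _ => inter_subset_left)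

theorem stmt3_general {α β : Type} [DecidableEq β] (F : Finset α) (w : α → ℝ)
    (hw : ∀ ℓ ∈ F, 0 < w ℓ) (W : α → Finset β)
    (hdisj : ∀ ℓ₁ ∈ F, ∀ ℓ₂ ∈ F, ℓ₁ ≠ ℓ₂ → Disjoint (W ℓ₁) (W ℓ₂))
    (wbar : β → ℝ)
    (hwbar : ∀ ℓ ∈ F, ∀ u ∈ W ℓ, wbar u = w ℓ / (W ℓ).card)
    (D : Finset β) (hD : D ⊆ F.biUnion W) :
    ∑ u ∈ D, wbar u ≤
      (∑ ℓ ∈ F, H (W ℓ).card * w ℓ) -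
        ∑ ℓ ∈ F.filter (fun ℓ => (W ℓ \ D).Nonempty), H ((W ℓ \ D).card) * w ℓ := by
  have hdrop : ∑ ℓ ∈ F.filter (fun ℓ => (W ℓ \ D).Nonempty), H ((W ℓ \ D).card) * w ℓ
      = ∑ ℓ ∈ F, H ((W ℓ \ D).card) * w ℓ :=
    sum_filter_of_ne fun ℓ _ hne => nonempty_iff_ne_empty.mpr fun h => hne (by simp [h])
  rw [hdrop, ← sum_sub_distrib,
    sum_eq_sum_sum_inter_of_subset_biUnion (fun ℓ₁ h₁ ℓ₂ h₂ => hdisj ℓ₁ h₁ ℓ₂ h₂) hD]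
  refine sum_le_sum fun ℓ hℓ => ?_
  rw [sum_congr rfl fun u hu => hwbar ℓ hℓ u (mem_inter.mp hu).1, sum_const, nsmul_eq_mul,
    ← sub_mul]
  exact card_inter_mul_div_card_le (W ℓ) D (hw ℓ hℓ).le

/-- For the potential `Φ(F) = ∑_{ℓ∈F} H_{|W_ℓ|} w(ℓ)` with disjoint witness
sets of size 1 or 2, removing a set `D ⊆ U` from all witness sets (and dropping links with
empty witness set) decreases `Φ` by at least `∑_{u∈D} wbar u`. -/
theorem stmt3 {α β : Type} [DecidableEq α] [DecidableEq β] (F : Finset α) (w : α → ℝ)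
    (hw : ∀ ℓ ∈ F, 0 < w ℓ) (W : α → Finset β)
    (hWcard : ∀ ℓ ∈ F, (W ℓ).card = 1 ∨ (W ℓ).card = 2)
    (hdisj : ∀ ℓ₁ ∈ F, ∀ ℓ₂ ∈ F, ℓ₁ ≠ ℓ₂ → Disjoint (W ℓ₁) (W ℓ₂))
    (wbar : β → ℝ)
    (hwbar : ∀ ℓ ∈ F, ∀ u ∈ W ℓ, wbar u = w ℓ / (W ℓ).card)
    (D : Finset β) (hD : D ⊆ F.biUnion W) :
    ∑ u ∈ D, wbar u ≤
      (∑ ℓ ∈ F, H (W ℓ).card * w ℓ) -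
        ∑ ℓ ∈ F.filter (fun ℓ => (W ℓ \ D).Nonempty), H ((W ℓ \ D).card) * w ℓ :=
  stmt3_general F w hw W hdisj wbar hwbar D hD
end

section
/- Let F be a finite set with weights w: F → ℝ_{>0} and witness sets W_f (nonempty finite sets, not necessarily disjoint), U = ⋃_{f∈F} W_f, and w̄(e) = ∑_{f: e∈W_f} w(f)/|W_f| for e ∈ U. Define Φ(F) = ∑_{f∈F} H_{|W_f|} w(f). For any D ⊆ U, Φ(F) − ∑_{f∈F} H_{|W_f∖D|} w(f) ≥ ∑_{e∈D} w̄(e). -/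
/-! Each of the `q - p` terms of `H q - H p = ∑_{p ≤ i < q} 1/(i+1)` is at least `1/q`, so
removing `|W_f ∩ D|` elements from `W_f` lowers `H_{|W_f|}` by at least `|W_f ∩ D| / |W_f|`.
Weighting by `w f ≥ 0` and summing over `f`, these lower bounds add up to `∑_{e ∈ D} w̄(e)` after exchanging
the order of summation. -/

open Finset

theorem sub_div_le_H_sub_H {p q : ℕ} (hpq : p ≤ q) : ((q : ℝ) - p) / q ≤ H q - H p := by
  have hterm : ∀ i ∈ Ico p q, (1 : ℝ) / q ≤ 1 / (i + 1) := fun i hi =>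
    one_div_le_one_div_of_le (by positivity) (by exact_mod_cast (mem_Ico.mp hi).2)
  calc ((q : ℝ) - p) / q = #(Ico p q) • (1 / (q : ℝ)) := by
        rw [Nat.card_Ico, nsmul_eq_mul]; push_cast [hpq]; ring
    _ ≤ ∑ i ∈ Ico p q, 1 / (i + 1 : ℝ) := card_nsmul_le_sum _ _ _ hterm
    _ = H q - H p := by rw [H, H, sum_Ico_eq_sub _ hpq]

theorem card_inter_div_card_le_H_sub_H_sdiff {β : Type*} [DecidableEq β] (W D : Finset β) :
    (#(D ∩ W) : ℝ) / #W ≤ H #W - H #(W \ D) := by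
  have hcard : #(W \ D) + #(D ∩ W) = #W := by
    rw [inter_comm]; exact card_sdiff_add_card_inter W D
  have hinter : (#(D ∩ W) : ℝ) = #W - #(W \ D) := by
    rw [← hcard]; push_cast; ring
  rw [hinter]
  exact sub_div_le_H_sub_H (card_le_card sdiff_subset)

theorem sum_sum_filter_mem_eq_sum_card_inter_mul {α β M : Type*} [DecidableEq β] [AddCommMonoid M]
    (F : Finset α) (W : α → Finset β) (D : Finset β) (g : α → M) :
    ∑ e ∈ D, ∑ f ∈ F.filter (fun f => e ∈ W f), g f = ∑ f ∈ F, #(D ∩ W f) • g f := by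
  simp only [sum_filter]
  rw [sum_comm]
  exact sum_congr rfl fun f _ => by rw [sum_ite_mem, sum_const]

theorem stmt4_general {α β : Type} [DecidableEq β] (F : Finset α) (w : α → ℝ)
    (hw : ∀ f ∈ F, 0 < w f) (W : α → Finset β)
    (wbar : β → ℝ)
    (hwbar : ∀ e, wbar e = ∑ f ∈ F.filter (fun f => e ∈ W f), w f / (W f).card)
    (D : Finset β) :
    ∑ e ∈ D, wbar e ≤
      (∑ f ∈ F, H (W f).card * w f) - ∑ f ∈ F, H ((W f \ D).card) * w f := by
  simp only [hwbar, sum_sum_filter_mem_eq_sum_card_inter_mul, ← sum_sub_distrib, ← sub_mul]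
  refine sum_le_sum fun f hf => ?_
  calc #(D ∩ W f) • (w f / #(W f)) = (#(D ∩ W f) : ℝ) / #(W f) * w f := by
        rw [nsmul_eq_mul]; ring
    _ ≤ _ := mul_le_mul_of_nonneg_right (card_inter_div_card_le_H_sub_H_sdiff (W f) D) (hw f hf).le

/-- For the potential `Φ(F) = ∑_{f∈F} H_{|W_f|} w(f)` with (possibly
overlapping) nonempty witness sets, and `wbar e = ∑_{f : e ∈ W_f} w(f)/|W_f|`,
removing any `D ⊆ U = ⋃_f W_f` from the witness sets decreases `Φ` by at least
`∑_{e∈D} wbar e`. -/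
theorem stmt4 {α β : Type} [DecidableEq α] [DecidableEq β] (F : Finset α) (w : α → ℝ)
    (hw : ∀ f ∈ F, 0 < w f) (W : α → Finset β)
    (hWne : ∀ f ∈ F, (W f).Nonempty)
    (wbar : β → ℝ)
    (hwbar : ∀ e, wbar e = ∑ f ∈ F.filter (fun f => e ∈ W f), w f / (W f).card)
    (D : Finset β) (hD : D ⊆ F.biUnion W) :
    ∑ e ∈ D, wbar e ≤
      (∑ f ∈ F, H (W f).card * w f) - ∑ f ∈ F, H ((W f \ D).card) * w f :=
  stmt4_general F w hw W wbar hwbar D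
end

section
/- Let M be a matroid on ground set E, let B₁, B₂ be bases of M, and let 𝒫₁ be a partition of B₁. Then there exists a partition 𝒫₂ of B₂ and a bijection φ: 𝒫₁ → 𝒫₂ such that for each X ∈ 𝒫₁, the set (B₂ ∖ φ(X)) ∪ X is a basis of M. -/
/-!
Pick a block `X` of `B₁`. By the multiple symmetric exchange property there is `Y ⊆ B₂` such that
both `(B₁ \ X) ∪ Y` and `(B₂ \ Y) ∪ X` are bases; in `M ／ Y` the sets `B₁ \ X` and `B₂ \ Y` are
bases, so induction on the number of blocks pairs the remaining blocks of `B₁` with a partition of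
`B₂ \ Y`, and `X` is paired with `Y`.

For bases `A`, `B` and `X ⊆ A`, multiple symmetric exchange says that `B` splits into a base of
`M ／ (A \ X)` and a base of `M ／ X`. By the matroid union theorem this reduces to
`|T| ≤ r(T ∪ (A \ X)) - |A \ X| + r(T ∪ X) - |X|` for `T ⊆ B`, which is submodularity.
-/

open Set

namespace Matroid

variable {α : Type*} {M : Matroid α} {I J T X : Set α} {e : α}

/-- The rank as a natural number; only meaningful when `M.RankFinite`, since `ENat.toNat ⊤ = 0`. -/
noncomputable def rk (M : Matroid α) (X : Set α) : ℕ := (M.eRk X).toNat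

lemma Indep.rk_eq_ncard (hI : M.Indep I) : M.rk I = I.ncard := by
  rw [rk, hI.eRk_eq_encard, ncard_def]

lemma cast_rk (M : Matroid α) [M.RankFinite] (X : Set α) : (M.rk X : ℕ∞) = M.eRk X :=
  ENat.natCast_toNat (eRk_ne_top_iff.2 (M.isRkFinite_set X))

section RankFinite

variable [M.RankFinite]

lemma Indep.ncard_le_rk_of_subset (hI : M.Indep I) (hIX : I ⊆ X) : I.ncard ≤ M.rk X := by
  have := hI.encard_le_eRk_of_subset hIX
  rw [← hI.finite.cast_ncard_eq, ← M.cast_rk] at this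
  exact_mod_cast this

lemma rk_inter_add_rk_union_le (X Y : Set α) :
    M.rk (X ∩ Y) + M.rk (X ∪ Y) ≤ M.rk X + M.rk Y := by
  have := M.eRk_inter_add_eRk_union_le X Y
  simp only [← cast_rk] at this
  exact_mod_cast this

lemma rk_insert_le_add_one (e : α) (X : Set α) : M.rk (insert e X) ≤ M.rk X + 1 := by
  have := M.eRk_insert_le_add_one e X
  simp only [← cast_rk] at this
  exact_mod_cast this

lemma indep_singleton_of_rk_lt_rk_insert (h : M.rk X < M.rk (insert e X)) : M.Indep {e} := by
  by_contra he
  have hle : M.eRk {e} ≤ 1 := M.eRk_singleton_le e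
  have hne : M.eRk {e} ≠ 1 := by
    rwa [Ne, ← encard_singleton e, ← indep_iff_eRk_eq_encard]
  have h0 : M.eRk {e} ≤ 0 := Order.le_of_lt_add_one (lt_of_le_of_ne hle hne)
  have := M.eRk_eq_eRk_union_eRk_le_zero X h0
  rw [union_singleton, ← cast_rk, ← cast_rk] at this
  exact h.ne (by exact_mod_cast this.symm)

lemma Indep.rk_union_le_rk_contract_add (hJ : M.Indep J) (X : Set α) :
    M.rk (X ∪ J) ≤ (M ／ J).rk X + J.ncard := by
  obtain ⟨I, hI, hJI⟩ := hJ.subset_isBasis'_of_subset (subset_union_right (s := X))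
  have hIJ : I \ J ⊆ X := by
    rw [sdiff_subset_iff, union_comm]; exact hI.subset
  calc M.rk (X ∪ J) = I.ncard := by rw [rk, ← hI.encard_eq_eRk, ncard_def]
    _ = (I \ J).ncard + J.ncard := (ncard_sdiff_add_ncard_of_subset hJI hI.indep.finite).symm
    _ ≤ (M ／ J).rk X + J.ncard :=
      Nat.add_le_add_right
        ((hI.indep.diff_indep_contract_of_subset hJI).ncard_le_rk_of_subset hIJ) _

lemma Indep.rk_union_le_rk_contract_add_rk (hJ : M.Indep J) (hJT : J ⊆ T) (U : Set α) :
    M.rk (U ∪ T) ≤ (M ／ J).rk U + M.rk T := by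
  have hsub := M.rk_inter_add_rk_union_le (U ∪ J) T
  rw [union_assoc, union_eq_self_of_subset_left hJT] at hsub
  have hJ' := hJ.ncard_le_rk_of_subset (subset_inter (subset_union_right (s := U)) hJT)
  have := hJ.rk_union_le_rk_contract_add U
  omega

end RankFinite

/-- Independence of `S` in the matroid union `M₁ ∨ M₂`. -/
def UnionIndep (M₁ M₂ : Matroid α) (S : Set α) : Prop :=
  ∃ I₁ I₂, Disjoint I₁ I₂ ∧ I₁ ∪ I₂ = S ∧ M₁.Indep I₁ ∧ M₂.Indep I₂

namespace UnionIndep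

variable {M₁ M₂ : Matroid α} {S J₁ J₂ : Set α}

lemma symm (h : UnionIndep M₁ M₂ S) : UnionIndep M₂ M₁ S := by
  obtain ⟨I₁, I₂, hdisj, hS, h₁, h₂⟩ := h
  exact ⟨I₂, I₁, hdisj.symm, union_comm I₁ I₂ ▸ hS, h₂, h₁⟩

lemma empty (M₁ M₂ : Matroid α) : UnionIndep M₁ M₂ ∅ :=
  ⟨∅, ∅, disjoint_empty _, union_empty _, M₁.empty_indep, M₂.empty_indep⟩

lemma of_contract (h : UnionIndep (M₁ ／ J₁) (M₂ ／ J₂) S) (hJ₁ : M₁.Indep J₁)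
    (hJ₂ : M₂.Indep J₂) (hJ : Disjoint J₁ J₂) (hSJ : Disjoint S (J₁ ∪ J₂)) :
    UnionIndep M₁ M₂ (S ∪ (J₁ ∪ J₂)) := by
  obtain ⟨I₁, I₂, hdisj, rfl, h₁, h₂⟩ := h
  rw [hJ₁.contract_indep_iff] at h₁
  rw [hJ₂.contract_indep_iff] at h₂
  refine ⟨I₁ ∪ J₁, I₂ ∪ J₂, ?_, union_union_union_comm .., h₁.2, h₂.2⟩
  rw [disjoint_union_left, disjoint_union_right, disjoint_union_right] at hSJ
  rw [disjoint_union_left, disjoint_union_right, disjoint_union_right]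
  exact ⟨⟨hdisj, hSJ.1.2⟩, hSJ.2.1.symm, hJ⟩

lemma of_contract_singleton {e : α} (h : UnionIndep (M₁ ／ {e}) M₂ (S \ {e}))
    (he : M₁.Indep {e}) (heS : e ∈ S) : UnionIndep M₁ M₂ S := by
  rw [← M₂.contract_empty] at h
  simpa [heS] using h.of_contract he M₂.empty_indep (disjoint_empty _) (by simp)

end UnionIndep

section Union

variable {M₁ M₂ : Matroid α} [M₁.RankFinite] [M₂.RankFinite] {S : Set α}

lemma forall_ncard_le_rk_contract_add_rk_contract_of_tight {J₁ J₂ : Set α} (hJ₁ : M₁.Indep J₁)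
    (hJ₂ : M₂.Indep J₂) (hJ₁T : J₁ ⊆ T) (hJ₂T : J₂ ⊆ T) (hTS : T ⊆ S) (hS : S.Finite)
    (h : ∀ U ⊆ S, U.ncard ≤ M₁.rk U + M₂.rk U) (htight : M₁.rk T + M₂.rk T ≤ T.ncard) :
    ∀ U ⊆ S \ T, U.ncard ≤ (M₁ ／ J₁).rk U + (M₂ ／ J₂).rk U := by
  intro U hU
  have hUT := ncard_union_eq (disjoint_sdiff_left.mono_left hU) (hS.subset (hU.trans sdiff_subset))
    (hS.subset hTS)
  have := h (U ∪ T) (union_subset (hU.trans sdiff_subset) hTS)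
  have := hJ₁.rk_union_le_rk_contract_add_rk hJ₁T U
  have := hJ₂.rk_union_le_rk_contract_add_rk hJ₂T U
  omega

lemma forall_ncard_le_rk_contractElem_add_rk (he : M₁.Indep {e}) (heS : e ∈ S)
    (hS : S.Finite) (hslack : ∀ T ⊆ S, T.Nonempty → T ≠ S → T.ncard < M₁.rk T + M₂.rk T)
    (hSe : S.ncard ≤ M₁.rk S + M₂.rk (S \ {e})) :
    ∀ U ⊆ S \ {e}, U.ncard ≤ (M₁ ／ {e}).rk U + M₂.rk U := by
  intro U hU
  have heU : e ∉ U := fun h ↦ (hU h).2 rfl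
  have hUe : (U ∪ {e}).ncard = U.ncard + 1 := by
    rw [union_singleton, ncard_insert_of_notMem heU (hS.subset (hU.trans sdiff_subset))]
  have h₁ := he.rk_union_le_rk_contract_add U
  have h₂ := M₂.rk_insert_le_add_one e U
  rw [ncard_singleton] at h₁
  rw [← union_singleton] at h₂
  by_cases hUS : U ∪ {e} = S
  · subst hUS
    rw [union_sdiff_right, sdiff_singleton_eq_self heU, hUe] at hSe
    omega
  · have := hslack (U ∪ {e}) (union_subset (hU.trans sdiff_subset) (singleton_subset_iff.2 heS))
      (union_nonempty.2 (Or.inr (singleton_nonempty e))) hUS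
    omega

lemma indep_singleton_and_ncard_le_or (heS : e ∈ S) (hS : S.Finite)
    (h : ∀ T ⊆ S, T.ncard ≤ M₁.rk T + M₂.rk T) :
    (M₁.Indep {e} ∧ S.ncard ≤ M₁.rk S + M₂.rk (S \ {e})) ∨
      (M₂.Indep {e} ∧ S.ncard ≤ M₂.rk S + M₁.rk (S \ {e})) := by
  have hins : insert e (S \ {e}) = S := by rw [insert_sdiff_singleton, insert_eq_of_mem heS]
  have hSe : (S \ {e}).ncard + 1 = S.ncard := ncard_sdiff_singleton_add_one heS hS
  have hS' := h S subset_rfl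
  have hSe' := h (S \ {e}) sdiff_subset
  by_cases h₁ : M₁.rk (S \ {e}) < M₁.rk S
  · exact Or.inl ⟨indep_singleton_of_rk_lt_rk_insert (X := S \ {e}) (by rwa [hins]), by omega⟩
  by_cases h₂ : M₂.rk (S \ {e}) < M₂.rk S
  · exact Or.inr ⟨indep_singleton_of_rk_lt_rk_insert (X := S \ {e}) (by rwa [hins]), by omega⟩
  have he := h {e} (singleton_subset_iff.2 heS)
  rw [ncard_singleton, ← insert_empty_eq] at he
  have h₁₀ := M₁.empty_indep.rk_eq_ncard
  have h₂₀ := M₂.empty_indep.rk_eq_ncard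
  rw [ncard_empty] at h₁₀ h₂₀
  by_cases he₁ : M₁.rk ∅ < M₁.rk (insert e ∅)
  · exact Or.inl ⟨indep_singleton_of_rk_lt_rk_insert he₁, by omega⟩
  · exact Or.inr ⟨indep_singleton_of_rk_lt_rk_insert (X := ∅) (by omega), by omega⟩

/-- The matroid union theorem for two matroids. If a proper nonempty `T ⊆ S` is tight, split `T`
and then split `S \ T` in the two contractions by the parts of `T`; otherwise any `e ∈ S` can be
contracted in one of the two matroids. -/
theorem unionIndep_of_forall_ncard_le (hS : S.Finite)
    (h : ∀ T ⊆ S, T.ncard ≤ M₁.rk T + M₂.rk T) : UnionIndep M₁ M₂ S := by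
  induction hn : S.ncard using Nat.strong_induction_on generalizing S M₁ M₂ with
  | _ n IH =>
  obtain rfl | ⟨e, heS⟩ := S.eq_empty_or_nonempty
  · exact UnionIndep.empty M₁ M₂
  by_cases htight : ∃ T ⊆ S, T.Nonempty ∧ T ≠ S ∧ M₁.rk T + M₂.rk T ≤ T.ncard
  · obtain ⟨T, hTS, hTne, hTS', htight⟩ := htight
    obtain ⟨J₁, J₂, hJ, rfl, hJ₁, hJ₂⟩ := IH _ (hn ▸ ncard_lt_ncard (hTS.ssubset_of_ne hTS') hS)
      (hS.subset hTS) (fun U hU ↦ h U (hU.trans hTS)) rfl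
    have hlt : (S \ (J₁ ∪ J₂)).ncard < n := hn ▸ ncard_lt_ncard
      (sdiff_ssubset_left_iff.2 (by rwa [inter_eq_self_of_subset_right hTS])) hS
    have := IH _ hlt hS.sdiff (forall_ncard_le_rk_contract_add_rk_contract_of_tight hJ₁ hJ₂
      subset_union_left subset_union_right hTS hS h htight) rfl
    simpa [sdiff_union_of_subset hTS] using this.of_contract hJ₁ hJ₂ hJ disjoint_sdiff_left
  push Not at htight
  have hlt : (S \ {e}).ncard < n := hn ▸ ncard_sdiff_singleton_lt_of_mem heS hS
  rcases indep_singleton_and_ncard_le_or heS hS h with ⟨he, hSe⟩ | ⟨he, hSe⟩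
  · exact (IH _ hlt hS.sdiff (forall_ncard_le_rk_contractElem_add_rk he heS hS htight hSe)
      rfl).of_contract_singleton he heS
  · refine (IH _ hlt hS.sdiff (forall_ncard_le_rk_contractElem_add_rk he heS hS
      (fun T hTS hT hTS' ↦ add_comm (M₁.rk T) _ ▸ htight T hTS hT hTS') hSe) rfl
      |>.of_contract_singleton he heS).symm

end Union

section Exchange

variable [M.RankFinite] {A B : Set α}

lemma Indep.ncard_le_of_isBase (hI : M.Indep I) (hB : M.IsBase B) : I.ncard ≤ B.ncard := by
  obtain ⟨B', hB', hIB'⟩ := hI.exists_isBase_superset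
  exact (ncard_le_ncard hIB' hB'.finite).trans (hB'.ncard_eq_ncard_of_isBase hB).le

lemma Indep.isBase_of_ncard_le (hI : M.Indep I) (hB : M.IsBase B) (h : B.ncard ≤ I.ncard) :
    M.IsBase I := by
  obtain ⟨B', hB', hIB'⟩ := hI.exists_isBase_superset
  rwa [eq_of_subset_of_ncard_le hIB' (by rwa [hB'.ncard_eq_ncard_of_isBase hB]) hB'.finite]

/-- Multiple symmetric exchange: `(A \ X) ∪ Y` and `(B \ Y) ∪ X` are bases. -/
theorem IsBase.exists_multiple_symm_exchange (hA : M.IsBase A) (hB : M.IsBase B) (hX : X ⊆ A) :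
    ∃ Y ⊆ B, (M ／ (A \ X)).IsBase Y ∧ (M ／ X).IsBase (B \ Y) := by
  have hAX := hA.indep.subset (sdiff_subset (t := X))
  have hX' := hA.indep.subset hX
  have hXb : (M ／ (A \ X)).IsBase X :=
    hAX.contract_isBase_iff.2 ⟨by rwa [union_sdiff_cancel hX], disjoint_sdiff_right⟩
  have hAXb : (M ／ X).IsBase (A \ X) :=
    hX'.contract_isBase_iff.2 ⟨by rwa [sdiff_union_of_subset hX], disjoint_sdiff_left⟩
  have hcard := ncard_sdiff_add_ncard_of_subset hX hA.finite
  obtain ⟨Y, Z, hYZ, rfl, hY, hZ⟩ : UnionIndep (M ／ (A \ X)) (M ／ X) B := by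
    refine unionIndep_of_forall_ncard_le hB.finite fun T hT ↦ ?_
    -- submodularity: `r(T ∪ (A \ X)) + r(T ∪ X) ≥ r(T) + r(A) = |T| + |A|`
    have hsub := M.rk_inter_add_rk_union_le (T ∪ (A \ X)) (T ∪ X)
    rw [← union_inter_distrib_left, sdiff_inter_self, union_empty, union_union_union_comm,
      union_self, sdiff_union_of_subset hX] at hsub
    have := hAX.rk_union_le_rk_contract_add T
    have := hX'.rk_union_le_rk_contract_add T
    have := (hB.indep.subset hT).rk_eq_ncard
    have := hA.indep.ncard_le_rk_of_subset (subset_union_right (s := T))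
    omega
  have hYZcard := ncard_union_eq hYZ (hB.finite.subset subset_union_left)
    (hB.finite.subset subset_union_right)
  have hAB := hA.ncard_eq_ncard_of_isBase hB
  have hYle := hY.ncard_le_of_isBase hXb
  have hZle := hZ.ncard_le_of_isBase hAXb
  refine ⟨Y, subset_union_left, hY.isBase_of_ncard_le hXb (by omega), ?_⟩
  rw [union_sdiff_left, hYZ.symm.sdiff_eq_left]
  exact hZ.isBase_of_ncard_le hAXb (by omega)

lemma IsBase.exists_contract_exchange {R : Set α} (hB₁ : M.IsBase (X ∪ R)) (hB₂ : M.IsBase B)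
    (hXR : Disjoint X R) (hX : X.Nonempty) :
    ∃ Y ⊆ B, Y.Nonempty ∧ (M ／ Y).IsBase R ∧ (M ／ Y).IsBase (B \ Y) ∧ M.IsBase ((B \ Y) ∪ X) := by
  obtain ⟨Y, hYB, hY, hY'⟩ := hB₁.exists_multiple_symm_exchange hB₂ subset_union_left
  rw [union_sdiff_left, hXR.symm.sdiff_eq_left] at hY
  have hR := hB₁.indep.subset subset_union_right
  have hYind : M.Indep Y := hY.indep.of_contract
  obtain ⟨hYR, hYRdisj⟩ := hR.contract_isBase_iff.1 hY
  refine ⟨Y, hYB, ?_, hYind.contract_isBase_iff.2 ⟨by rwa [union_comm], hYRdisj.symm⟩,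
    hYind.contract_isBase_iff.2 ⟨by rwa [sdiff_union_of_subset hYB], disjoint_sdiff_left⟩,
    ((hB₁.indep.subset subset_union_left).contract_isBase_iff.1 hY').1⟩
  rw [← encard_pos, hY.encard_eq_encard_of_isBase (hR.contract_isBase_iff.2 ⟨hB₁, hXR⟩), encard_pos]
  exact hX

theorem IsBase.exists_block_exchange {B₁ B₂ : Set α} {P₁ : Set (Set α)} (hB₁ : M.IsBase B₁)
    (hB₂ : M.IsBase B₂) (hne : ∀ X ∈ P₁, X.Nonempty) (hdisj : P₁.Pairwise Disjoint)
    (hcov : ⋃₀ P₁ = B₁) :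
    ∃ P₂ : Set (Set α), (∀ Y ∈ P₂, Y.Nonempty) ∧ P₂.Pairwise Disjoint ∧ ⋃₀ P₂ = B₂ ∧
      ∃ φ : Set α → Set α, BijOn φ P₁ P₂ ∧ ∀ X ∈ P₁, M.IsBase ((B₂ \ φ X) ∪ X) := by
  classical
  have hP₁ : P₁.Finite :=
    hB₁.finite.finite_subsets.subset fun X hX ↦ hcov ▸ subset_sUnion_of_mem hX
  induction P₁, hP₁ using Set.Finite.induction_on generalizing M B₁ B₂ with
  | empty =>
    replace hB₁ : M.IsBase ∅ := by rwa [← sUnion_empty, hcov]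
    obtain rfl := (hB₁.eq_of_subset_isBase hB₂ (empty_subset B₂)).symm
    exact ⟨∅, by simp, pairwise_empty _, sUnion_empty, id, bijOn_empty id, by simp⟩
  | @insert X P hXP hP IH =>
    replace hB₁ : M.IsBase (X ∪ ⋃₀ P) := by rwa [← sUnion_insert, hcov]
    have hXP' : Disjoint X (⋃₀ P) := disjoint_sUnion_right.2 fun Z hZ ↦
      hdisj (mem_insert X P) (mem_insert_of_mem X hZ) (ne_of_mem_of_not_mem hZ hXP).symm
    obtain ⟨Y, hYB₂, hYne, hPY, hB₂Y, hXY⟩ :=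
      hB₁.exists_contract_exchange hB₂ hXP' (hne X (mem_insert X P))
    obtain ⟨P₂, hne₂, hdisj₂, hcov₂, φ, hφ, hbase⟩ := IH hPY hB₂Y
      (fun Z hZ ↦ hne Z (mem_insert_of_mem X hZ)) (hdisj.mono (subset_insert X P)) rfl
    have hP₂ : ∀ Z ∈ P₂, Z ⊆ B₂ \ Y := fun Z hZ ↦ hcov₂ ▸ subset_sUnion_of_mem hZ
    have hYP₂ : Y ∉ P₂ := fun h ↦ hYne.ne_empty (disjoint_self.1 (subset_sdiff.1 (hP₂ Y h)).2)
    have hφX : EqOn φ (Function.update φ X Y) P := fun Z hZ ↦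
      (Function.update_of_ne (ne_of_mem_of_not_mem hZ hXP) _ _).symm
    refine ⟨insert Y P₂, forall_mem_insert.2 ⟨hYne, hne₂⟩, ?_, ?_, Function.update φ X Y, ?_, ?_⟩
    · exact pairwise_insert_of_symm.2
        ⟨hdisj₂, fun Z hZ _ ↦ disjoint_sdiff_right.mono_right (hP₂ Z hZ)⟩
    · rw [sUnion_insert, hcov₂, union_sdiff_cancel hYB₂]
    · have := (hφ.congr hφX).insert (a := X) (by rwa [Function.update_self])
      rwa [Function.update_self] at this
    · rintro Z (rfl | hZ)
      · rwa [Function.update_self]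
      · have hYφZ : Y ⊆ B₂ \ φ Z :=
          subset_sdiff.2 ⟨hYB₂, (subset_sdiff.1 (hP₂ _ (hφ.mapsTo hZ))).2.symm⟩
        have := ((hB₂.indep.subset hYB₂).contract_isBase_iff.1 (hbase Z hZ)).1
        rwa [sdiff_right_comm, union_right_comm, sdiff_union_of_subset hYφZ, hφX hZ] at this

end Exchange

end Matroid

/-- Greene's block exchange property: For bases `B₁, B₂` of a finite matroid
`M` and a partition `P₁` of `B₁`, there is a partition `P₂` of `B₂` and a bijection
`φ : P₁ → P₂` such that `(B₂ \ φ X) ∪ X` is a basis for every block `X ∈ P₁`. -/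
theorem stmt8 {α : Type} (M : Matroid α) (hfin : M.Finite)
    (B₁ B₂ : Set α) (h1 : M.IsBase B₁) (h2 : M.IsBase B₂)
    (P₁ : Set (Set α)) (hne₁ : ∀ X ∈ P₁, X.Nonempty)
    (hdisj₁ : P₁.Pairwise Disjoint) (hcov₁ : ⋃₀ P₁ = B₁) :
    ∃ P₂ : Set (Set α), (∀ Y ∈ P₂, Y.Nonempty) ∧ P₂.Pairwise Disjoint ∧ ⋃₀ P₂ = B₂ ∧
      ∃ φ : Set α → Set α, Set.BijOn φ P₁ P₂ ∧
        ∀ X ∈ P₁, M.IsBase ((B₂ \ φ X) ∪ X) :=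
  have := hfin
  h1.exists_block_exchange h2 hne₁ hdisj₁ hcov₁
end
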